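/- arXiv:2210.12392 — 8 statements merged into one kernel-verified Lean document; each statement's English description precedes it below -/
import Mathlib

section
/- Let X be a countable index set, n > 0 a real number, (λ_x)_{x∈X} nonnegative reals with ∑_{x∈X} λ_x = n, and let (N_x)_{x∈X} be independent random variables with N_x ~ Poisson(λ_x). Then E[∑_{x∈X} N_x·1{N_x is even and N_x ≠ 0}] ≤ n/2 and E[∑_{x∈X} N_x·1{N_x is odd and N_x ≠ 1}] ≤ n/2. That is, excluding singletons, in expectation at most half of the n data items appear an even number of times, and at most half an odd number of times. -/
/-!
For `N ~ Po(r)` the size-bias identity `E[N f(N)] = r E[f(N + 1)]` turns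
`E[N; N even, N ≠ 0]` into `r P(N odd) = r e^{-r} sinh r` and `E[N; N odd, N ≠ 1]` into
`r P(N even, N ≠ 0) = r e^{-r} (cosh r - 1)`. Both probabilities are at most `1/2`, so the
contribution of `x` is at most `λ_x / 2`, and summing over `x` gives `n / 2`.
-/

open MeasureTheory Real ProbabilityTheory
open scoped ENNReal NNReal Nat

namespace ProbabilityTheory

lemma map_eq_poissonMeasure {Ω : Type*} [MeasurableSpace Ω] {μ : Measure Ω} {N : Ω → ℕ}
    (hN : Measurable N) {r : ℝ≥0}
    (h : ∀ k, μ {ω | N ω = k} = ENNReal.ofReal (r ^ k * exp (-r) / k !)) :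
    μ.map N = Po(r) := by
  refine Measure.ext_iff_singleton.mpr fun k ↦ ?_
  rw [Measure.map_apply hN (measurableSet_singleton k), poissonMeasure_singleton, mul_comm]
  exact h k

variable (r : ℝ≥0)

lemma natCast_succ_mul_poissonMeasure_singleton_succ (k : ℕ) :
    ((k + 1 : ℕ) : ℝ≥0∞) * Po(r) {k + 1} = r * Po(r) {k} := by
  have h : ((k + 1 : ℕ) : ℝ) * (exp (-r) * r ^ (k + 1) / (k + 1)!)
      = r * (exp (-r) * r ^ k / k !) := by
    rw [Nat.factorial_succ, pow_succ]
    push_cast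
    field_simp
  rw [poissonMeasure_singleton, poissonMeasure_singleton, ← ENNReal.ofReal_natCast,
    ← ENNReal.ofReal_mul (by positivity), h, ENNReal.ofReal_mul r.coe_nonneg,
    ENNReal.ofReal_coe_nnreal]

lemma lintegral_natCast_mul_poissonMeasure (f : ℕ → ℝ≥0∞) :
    ∫⁻ k, k * f k ∂Po(r) = r * ∫⁻ k, f (k + 1) ∂Po(r) := by
  rw [lintegral_countable', lintegral_countable', tsum_eq_zero_add' ENNReal.summable,
    ← ENNReal.tsum_mul_left]
  simp only [Nat.cast_zero, zero_mul, zero_add]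
  congr 1 with k
  rw [mul_right_comm, natCast_succ_mul_poissonMeasure_singleton_succ]
  ring

lemma lintegral_indicator_natCast_poissonMeasure (s : Set ℕ) :
    ∫⁻ k, s.indicator (↑) k ∂Po(r) = r * Po(r) ((· + 1) ⁻¹' s) := by
  have h (k : ℕ) : s.indicator (↑) k = (k : ℝ≥0∞) * s.indicator 1 k := by
    by_cases hk : k ∈ s <;> simp [hk]
  simp_rw [h, lintegral_natCast_mul_poissonMeasure]
  rw [← lintegral_indicator_one .of_discrete]
  rfl

lemma poissonMeasure_apply (s : Set ℕ) :
    Po(r) s = ∑' k, s.indicator (fun k ↦ ENNReal.ofReal (exp (-r) * r ^ k / k !)) k := by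
  rw [poissonMeasure, Measure.sum_apply _ .of_discrete]
  congr with k
  by_cases hk : k ∈ s <;> simp [hk]

lemma poissonMeasure_setOf_even :
    Po(r) {k | Even k} = ENNReal.ofReal (exp (-r) * cosh r) := by
  have hs : HasSum (fun m : ℕ ↦ exp (-r) * r ^ (2 * m) / (2 * m)!) (exp (-r) * cosh r) := by
    simpa only [mul_div_assoc] using (hasSum_cosh r).mul_left (exp (-r))
  rw [poissonMeasure_apply, ← tsum_even_add_odd ENNReal.summable ENNReal.summable, ← hs.tsum_eq,
    ENNReal.ofReal_tsum_of_nonneg (fun _ ↦ by positivity) hs.summable]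
  simp [parity_simps]

lemma poissonMeasure_setOf_odd :
    Po(r) {k | Odd k} = ENNReal.ofReal (exp (-r) * sinh r) := by
  have hs : HasSum (fun m : ℕ ↦ exp (-r) * r ^ (2 * m + 1) / (2 * m + 1)!)
      (exp (-r) * sinh r) := by
    simpa only [mul_div_assoc] using (hasSum_sinh r).mul_left (exp (-r))
  rw [poissonMeasure_apply, ← tsum_even_add_odd ENNReal.summable ENNReal.summable, ← hs.tsum_eq,
    ENNReal.ofReal_tsum_of_nonneg (fun _ ↦ by positivity) hs.summable]
  simp [parity_simps]

lemma poissonMeasure_setOf_odd_le : Po(r) {k | Odd k} ≤ 2⁻¹ := by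
  have h : exp (-r) * exp r = 1 := by rw [← exp_add, neg_add_cancel, exp_zero]
  rw [poissonMeasure_setOf_odd]
  refine (ENNReal.ofReal_le_ofReal (q := 2⁻¹) ?_).trans_eq (by simp)
  rw [sinh_eq]
  nlinarith [sq_nonneg (exp (-r))]

lemma poissonMeasure_setOf_even_diff_zero_le : Po(r) ({k | Even k} \ {0}) ≤ 2⁻¹ := by
  have h : exp (-r) * exp r = 1 := by rw [← exp_add, neg_add_cancel, exp_zero]
  have h1 : exp (-r) ≤ 1 := exp_le_one_iff.mpr (neg_nonpos.mpr r.coe_nonneg)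
  rw [measure_sdiff (by simp) (measurableSet_singleton 0).nullMeasurableSet (measure_ne_top _ _),
    poissonMeasure_setOf_even, poissonMeasure_singleton, ← ENNReal.ofReal_sub _ (by positivity)]
  refine (ENNReal.ofReal_le_ofReal (q := 2⁻¹) ?_).trans_eq (by simp)
  simp only [pow_zero, Nat.factorial_zero, Nat.cast_one, mul_one, div_one, cosh_eq]
  nlinarith [exp_pos (-r)]

lemma lintegral_even_ne_zero_poissonMeasure :
    ∫⁻ k, (if Even k ∧ k ≠ 0 then (k : ℝ≥0∞) else 0) ∂Po(r)
      = r * Po(r) {k | Odd k} := by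
  have h : (fun k : ℕ ↦ if Even k ∧ k ≠ 0 then (k : ℝ≥0∞) else 0)
      = {k | Even k ∧ k ≠ 0}.indicator Nat.cast := by
    ext k; simp [Set.indicator_apply]
  rw [h, lintegral_indicator_natCast_poissonMeasure]
  congr 2 with k
  simp [Nat.even_add_one]

lemma lintegral_odd_ne_one_poissonMeasure :
    ∫⁻ k, (if Odd k ∧ k ≠ 1 then (k : ℝ≥0∞) else 0) ∂Po(r)
      = r * Po(r) ({k | Even k} \ {0}) := by
  have h : (fun k : ℕ ↦ if Odd k ∧ k ≠ 1 then (k : ℝ≥0∞) else 0)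
      = {k | Odd k ∧ k ≠ 1}.indicator Nat.cast := by
    ext k; simp [Set.indicator_apply]
  rw [h, lintegral_indicator_natCast_poissonMeasure]
  congr 2 with k
  simp [Nat.odd_add_one]

end ProbabilityTheory

theorem even_odd_test_expectation_bound_general
    (Ω : Type*) [MeasurableSpace Ω] (μ : Measure Ω)
    (X : Type*) [Countable X]
    (n : ℝ) (lam : X → ℝ) (hlam : ∀ x, 0 ≤ lam x) (hsum : HasSum lam n)
    (N : X → Ω → ℕ) (hmeas : ∀ x, Measurable (N x))
    (hdist : ∀ x k, μ {ω | N x ω = k}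
      = ENNReal.ofReal (lam x ^ k * Real.exp (-lam x) / k.factorial)) :
    (∫⁻ ω, ∑' x, (if Even (N x ω) ∧ N x ω ≠ 0 then (N x ω : ℝ≥0∞) else 0) ∂μ
        ≤ ENNReal.ofReal (n / 2))
    ∧ (∫⁻ ω, ∑' x, (if Odd (N x ω) ∧ N x ω ≠ 1 then (N x ω : ℝ≥0∞) else 0) ∂μ
        ≤ ENNReal.ofReal (n / 2)) := by
  have reduce_to_poisson (g : ℕ → ℝ≥0∞) (hg : ∀ r : ℝ≥0, ∫⁻ k, g k ∂Po(r) ≤ r / 2) :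
      ∫⁻ ω, ∑' x, g (N x ω) ∂μ ≤ ENNReal.ofReal (n / 2) := by
    have hsum2 := hsum.div_const 2
    rw [lintegral_tsum (f := fun x ω ↦ g (N x ω))
        fun x ↦ (Measurable.of_discrete.comp (hmeas x)).aemeasurable,
      ← hsum2.tsum_eq,
      ENNReal.ofReal_tsum_of_nonneg (fun x ↦ by linarith [hlam x]) hsum2.summable]
    refine ENNReal.tsum_le_tsum fun x ↦ ?_
    rw [← lintegral_map .of_discrete (hmeas x),
      map_eq_poissonMeasure (r := ⟨lam x, hlam x⟩) (hmeas x) (hdist x),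
      ENNReal.ofReal_div_of_pos two_pos, ENNReal.ofReal_ofNat,
      ENNReal.ofReal_eq_coe_nnreal (hlam x)]
    exact hg ⟨lam x, hlam x⟩
  refine ⟨reduce_to_poisson (fun k ↦ if Even k ∧ k ≠ 0 then (k : ℝ≥0∞) else 0) fun r ↦ ?_,
    reduce_to_poisson (fun k ↦ if Odd k ∧ k ≠ 1 then (k : ℝ≥0∞) else 0) fun r ↦ ?_⟩
  · rw [lintegral_even_ne_zero_poissonMeasure, div_eq_mul_inv]
    gcongr
    exact poissonMeasure_setOf_odd_le r
  · rw [lintegral_odd_ne_one_poissonMeasure, div_eq_mul_inv]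
    gcongr
    exact poissonMeasure_setOf_even_diff_zero_le r

/-- Even/odd test expectation bounds: if `N_x` are independent Poisson(`λ_x`) with
`∑_x λ_x = n`, then `E[∑_x N_x·1{N_x even, N_x ≠ 0}] ≤ n/2` and
`E[∑_x N_x·1{N_x odd, N_x ≠ 1}] ≤ n/2`. -/
theorem even_odd_test_expectation_bound
    (Ω : Type*) [MeasurableSpace Ω] (μ : Measure Ω) [IsProbabilityMeasure μ]
    (X : Type*) [Countable X]
    (n : ℝ) (hn : 0 < n) (lam : X → ℝ) (hlam : ∀ x, 0 ≤ lam x) (hsum : HasSum lam n)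
    (N : X → Ω → ℕ) (hmeas : ∀ x, Measurable (N x))
    (hindep : ProbabilityTheory.iIndepFun N μ)
    (hdist : ∀ x k, μ {ω | N x ω = k}
      = ENNReal.ofReal (lam x ^ k * Real.exp (-lam x) / k.factorial)) :
    (∫⁻ ω, ∑' x, (if Even (N x ω) ∧ N x ω ≠ 0 then (N x ω : ℝ≥0∞) else 0) ∂μ
        ≤ ENNReal.ofReal (n / 2))
    ∧ (∫⁻ ω, ∑' x, (if Odd (N x ω) ∧ N x ω ≠ 1 then (N x ω : ℝ≥0∞) else 0) ∂μ
        ≤ ENNReal.ofReal (n / 2)) :=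
  even_odd_test_expectation_bound_general Ω μ X n lam hlam hsum N hmeas hdist
end

section
/- Fix an integer k ≥ 2 and define g_δ(λ) := λ^k e^{−λ}/k! − λ^{k−1} e^{−λ}/(k−1)! for λ > 0 (the difference of the Poisson(λ) probability mass function at k and at k−1). Then λ* := k − 1/2 + √(k + 1/4) is the global maximizer of g_δ(λ)/λ over λ > 0; that is, g_δ(λ)/λ ≤ g_δ(λ*)/λ* for all λ > 0. -/
/-!
Dividing by `λ` and writing `k = m + 2`, the function to maximize is
`e^{-λ} λ^m (λ - k) / k!`. It is nonpositive for `λ ≤ k`, and for `λ > k` the sign of its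
derivative is that of `-(λ² - (2k - 1) λ + k m)`. The larger root `λ*` of this quadratic lies
above `k` (the quadratic equals `-k` at `k`), so the function increases on `(k, λ*]` and
decreases on `[λ*, ∞)`.
-/

open Real Set

theorem le_of_hasDerivAt_nonneg_of_nonpos {f f' : ℝ → ℝ} {K a x : ℝ} (hKa : K < a)
    (hf : ∀ y, K < y → HasDerivAt f (f' y) y) (hinc : ∀ y ∈ Ioo K a, 0 ≤ f' y)
    (hdec : ∀ y ∈ Ioi a, f' y ≤ 0) (hx : K < x) : f x ≤ f a := by
  have hcont : ∀ s ⊆ Ioi K, ContinuousOn f s := fun s hs y hy =>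
    (hf y (hs hy)).continuousAt.continuousWithinAt
  rcases le_total x a with hxa | hax
  · have hmono : MonotoneOn f (Ioc K a) :=
      monotoneOn_of_hasDerivWithinAt_nonneg (convex_Ioc K a) (hcont _ Ioc_subset_Ioi_self)
        (fun y hy => by rw [interior_Ioc] at hy; exact (hf y hy.1).hasDerivWithinAt)
        (by rwa [interior_Ioc])
    exact hmono ⟨hx, hxa⟩ ⟨hKa, le_rfl⟩ hxa
  · have hanti : AntitoneOn f (Ici a) :=
      antitoneOn_of_hasDerivWithinAt_nonpos (convex_Ici a)
        (hcont _ fun y hy => hKa.trans_le hy)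
        (fun y hy => by rw [interior_Ici] at hy; exact (hf y (hKa.trans hy)).hasDerivWithinAt)
        (by rwa [interior_Ici])
    exact hanti self_mem_Ici hax hax

theorem hasDerivAt_exp_neg_mul_pow_mul_sub (m : ℕ) (K : ℝ) {x : ℝ} (hx : 0 < x) :
    HasDerivAt (fun y => exp (-y) * y ^ m * (y - K))
      (-(exp (-x) * x ^ m * (x ^ 2 - (K + m + 1) * x + K * m)) / x) x := by
  refine ((((hasDerivAt_neg x).exp).mul (hasDerivAt_pow m x)).mul
    ((hasDerivAt_id x).sub_const K)).congr_deriv ?_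
  rw [eq_div_iff hx.ne']
  cases m with
  | zero => simp only [pow_zero, CharP.cast_eq_zero, zero_mul, id, Pi.mul_apply]; ring
  | succ n => simp only [Nat.add_sub_cancel, id, Pi.mul_apply]; push_cast; ring

theorem exp_neg_mul_pow_mul_sub_le {m : ℕ} {K a x : ℝ} (hK : 0 < K) (hKa : K < a)
    (ha : a ^ 2 - (K + m + 1) * a + K * m = 0) (hx : 0 ≤ x) :
    exp (-x) * x ^ m * (x - K) ≤ exp (-a) * a ^ m * (a - K) := by
  rcases le_or_gt x K with hxK | hKx
  · calc exp (-x) * x ^ m * (x - K) ≤ 0 :=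
          mul_nonpos_of_nonneg_of_nonpos (by positivity) (by linarith)
      _ ≤ exp (-a) * a ^ m * (a - K) :=
          mul_nonneg (mul_nonneg (exp_pos _).le (pow_nonneg (by linarith) m)) (by linarith)
  -- `a` and `b` are the roots of the quadratic, and `b < K` because the quadratic is `-K` at `K`.
  set b := K + m + 1 - a
  have hfactor : ∀ y : ℝ, y ^ 2 - (K + m + 1) * y + K * m = (y - a) * (y - b) := fun y => by
    linear_combination ha
  have hbK : b < K := by
    have hqK : (K - a) * (K - b) = -K := by rw [← hfactor]; ring
    nlinarith
  refine le_of_hasDerivAt_nonneg_of_nonpos hKa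
    (fun y hy => hasDerivAt_exp_neg_mul_pow_mul_sub m K (hK.trans hy)) ?_ ?_ hKx
  · rintro y ⟨hKy, hya⟩
    have hy : 0 < y := hK.trans hKy
    rw [hfactor, neg_div, neg_nonneg]
    exact div_nonpos_of_nonpos_of_nonneg (mul_nonpos_of_nonneg_of_nonpos (by positivity)
      (mul_nonpos_of_nonpos_of_nonneg (by linarith) (by linarith))) hy.le
  · intro y (hay : a < y)
    have hy : 0 < y := hK.trans (hKa.trans hay)
    rw [hfactor, neg_div, neg_nonpos]
    exact div_nonneg (mul_nonneg (by positivity) (mul_nonneg (by linarith) (by linarith))) hy.le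

theorem poisson_slope_div_eq (m : ℕ) {x : ℝ} (hx : x ≠ 0) :
    (x ^ (m + 2) * exp (-x) / (m + 2).factorial
        - x ^ (m + 2 - 1) * exp (-x) / (m + 2 - 1).factorial) / x
      = exp (-x) * x ^ m * (x - ((m + 2 : ℕ) : ℝ)) / (m + 2).factorial := by
  rw [show m + 2 - 1 = m + 1 from rfl, Nat.factorial_succ (m + 1)]
  push_cast
  field_simp
  ring

/-- For `k ≥ 2`, `λ* = k - 1/2 + √(k + 1/4)` is the global maximizer over `λ > 0` of
`g_δ(λ)/λ`, where `g_δ(λ) = λ^k e^{-λ}/k! - λ^{k-1} e^{-λ}/(k-1)!` is the slope of the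
Poisson pmf. -/
theorem slope_test_maximizer (k : ℕ) (hk : 2 ≤ k) :
    ∀ l : ℝ, 0 < l →
      (l ^ k * Real.exp (-l) / k.factorial
          - l ^ (k - 1) * Real.exp (-l) / (k - 1).factorial) / l
      ≤ (((k : ℝ) - 1 / 2 + Real.sqrt ((k : ℝ) + 1 / 4)) ^ k
            * Real.exp (-((k : ℝ) - 1 / 2 + Real.sqrt ((k : ℝ) + 1 / 4))) / k.factorial
          - ((k : ℝ) - 1 / 2 + Real.sqrt ((k : ℝ) + 1 / 4)) ^ (k - 1)
            * Real.exp (-((k : ℝ) - 1 / 2 + Real.sqrt ((k : ℝ) + 1 / 4))) / (k - 1).factorial)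
        / ((k : ℝ) - 1 / 2 + Real.sqrt ((k : ℝ) + 1 / 4)) := by
  obtain ⟨m, rfl⟩ : ∃ m, k = m + 2 := ⟨k - 2, by omega⟩
  intro l hl
  set K : ℝ := ((m + 2 : ℕ) : ℝ) with hK
  set s := √(K + 1 / 4)
  have hs : s ^ 2 = K + 1 / 4 := sq_sqrt (by positivity)
  have hs_gt : 1 / 2 < s := lt_sqrt (by norm_num) |>.mpr (by simp only [hK]; push_cast; linarith)
  have hKa : K < K - 1 / 2 + s := by linarith
  have hroot : (K - 1 / 2 + s) ^ 2 - (K + m + 1) * (K - 1 / 2 + s) + K * m = 0 := by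
    push_cast [hK] at hs ⊢; linear_combination hs
  rw [poisson_slope_div_eq m hl.ne', poisson_slope_div_eq m (by linarith)]
  refine div_le_div_of_nonneg_right ?_ (Nat.cast_nonneg _)
  exact exp_neg_mul_pow_mul_sub_le (by positivity) hKa hroot hl.le
end

section
/- Fix an integer k ≥ 2 and define g_γ(λ) := 2·λ^k e^{−λ}/k! − λ^{k−1} e^{−λ}/(k−1)! − λ^{k+1} e^{−λ}/(k+1)! for λ > 0. Then for all λ > 0, g_γ(λ)/λ ≤ g_γ(k)/k = k^{k−1} e^{−k}/((k+1)·k!); that is, λ = k is a global maximizer of g_γ(λ)/λ over λ > 0. Consequently, if (λ_x)_{x∈X} are nonnegative reals over a countable index set with ∑_x λ_x = n, then ∑_x g_γ(λ_x) ≤ n·k^{k−1} e^{−k}/((k+1)·k!). -/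
/-!
Factoring out the Poisson weight gives `g(λ) = λ^(k-1) e^(-λ) (2(k+1)λ - k(k+1) - λ²) / (k+1)!`,
whose quadratic factor is at most `λ²/k`, the difference being `(k+1)(λ-k)²/k`. Hence
`g(λ) ≤ λ · λ^k e^(-λ) / (k (k+1)!)`, and `λ^k e^(-λ)` is maximal at `λ = k` (apply `x ≤ e^(x-1)` to
`x = λ/k`). Equality holds throughout at `λ = k`, so `g(λ) ≤ λ g(k)/k` for all `λ ≥ 0`, which
also gives the bound on `∑ g(λ_x)` term by term.
-/

open Real

theorem pow_mul_exp_neg_le_pow_mul_exp_neg (k : ℕ) {l : ℝ} (hl : 0 ≤ l) :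
    l ^ k * exp (-l) ≤ (k : ℝ) ^ k * exp (-k) := by
  rcases k.eq_zero_or_pos with rfl | hk
  · simpa using hl
  have hk : (0 : ℝ) < k := by exact_mod_cast hk
  have hratio : l / k ≤ exp (l / k - 1) := by linarith [add_one_le_exp (l / k - 1)]
  have hpow : (l / k) ^ k ≤ exp (l - k) := by
    calc (l / k) ^ k ≤ exp (l / k - 1) ^ k := by gcongr
      _ = exp (l - k) := by rw [← exp_nat_mul]; congr 1; field_simp
  rw [div_pow, div_le_iff₀ (by positivity)] at hpow
  calc l ^ k * exp (-l) ≤ exp (l - k) * k ^ k * exp (-l) := by gcongr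
    _ = (k : ℝ) ^ k * exp (-k) := by rw [mul_comm (exp _), mul_assoc, ← exp_add]; ring_nf

-- `2 P_λ(k) - P_λ(k-1) - P_λ(k+1)` for the Poisson pmf `P_λ(j) = λ^j e^(-λ) / j!`
noncomputable def poissonCurvature (k : ℕ) (l : ℝ) : ℝ :=
  2 * l ^ k * exp (-l) / k.factorial
    - l ^ (k - 1) * exp (-l) / (k - 1).factorial
    - l ^ (k + 1) * exp (-l) / (k + 1).factorial

theorem poissonCurvature_eq {k : ℕ} (hk : 1 ≤ k) (l : ℝ) :
    poissonCurvature k l =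
      l ^ (k - 1) * exp (-l) * (2 * (k + 1) * l - k * (k + 1) - l ^ 2) / (k + 1).factorial := by
  obtain ⟨m, rfl⟩ : ∃ m, k = m + 1 := ⟨k - 1, by omega⟩
  simp only [poissonCurvature, Nat.add_sub_cancel, Nat.factorial_succ (m + 1), Nat.factorial_succ m]
  push_cast
  field_simp
  ring

theorem poissonCurvature_le {k : ℕ} (hk : 1 ≤ k) {l : ℝ} (hl : 0 ≤ l) :
    poissonCurvature k l ≤ l ^ (k + 1) * exp (-l) / (k * (k + 1).factorial) := by
  have hk' : (1 : ℝ) ≤ k := by exact_mod_cast hk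
  have hquad : 2 * (k + 1) * l - k * (k + 1) - l ^ 2 ≤ l ^ 2 / k := by
    rw [le_div_iff₀ (by positivity)]
    nlinarith [mul_nonneg (by positivity : (0 : ℝ) ≤ k + 1) (sq_nonneg (l - k))]
  have hpow : l ^ (k + 1) = l ^ (k - 1) * l ^ 2 := by
    rw [← pow_add]; congr 1; omega
  calc poissonCurvature k l
        ≤ l ^ (k - 1) * exp (-l) * (l ^ 2 / k) / (k + 1).factorial := by
          rw [poissonCurvature_eq hk]; gcongr
    _ = l ^ (k + 1) * exp (-l) / (k * (k + 1).factorial) := by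
          rw [hpow]; field_simp

theorem poissonCurvature_self {k : ℕ} (hk : 1 ≤ k) :
    poissonCurvature k k = (k : ℝ) ^ k * exp (-k) / (k + 1).factorial := by
  have hpow : (k : ℝ) ^ k = (k : ℝ) ^ (k - 1) * k := by rw [← pow_succ]; congr 1; omega
  rw [poissonCurvature_eq hk, hpow]
  ring

theorem poissonCurvature_self_div {k : ℕ} (hk : 1 ≤ k) :
    poissonCurvature k k / k = (k : ℝ) ^ (k - 1) * exp (-k) / ((k + 1) * k.factorial) := by
  have hpow : (k : ℝ) ^ k = (k : ℝ) ^ (k - 1) * k := by rw [← pow_succ]; congr 1; omega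
  have hk' : (k : ℝ) ≠ 0 := by positivity
  rw [poissonCurvature_self hk, hpow, Nat.factorial_succ]
  push_cast
  field_simp

theorem poissonCurvature_le_mul {k : ℕ} (hk : 1 ≤ k) {l : ℝ} (hl : 0 ≤ l) :
    poissonCurvature k l ≤ l * (poissonCurvature k k / k) := by
  calc poissonCurvature k l ≤ l ^ (k + 1) * exp (-l) / (k * (k + 1).factorial) :=
        poissonCurvature_le hk hl
    _ = l * (l ^ k * exp (-l) / (k * (k + 1).factorial)) := by ring
    _ ≤ l * ((k : ℝ) ^ k * exp (-k) / (k * (k + 1).factorial)) := by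
        gcongr _ * (?_ / _)
        exact pow_mul_exp_neg_le_pow_mul_exp_neg k hl
    _ = l * (poissonCurvature k k / k) := by rw [poissonCurvature_self hk, div_div, mul_comm (k : ℝ)]

theorem tsum_le_of_le_of_hasSum {ι : Type*} {f g : ι → ℝ} {a : ℝ} (hfg : ∀ i, f i ≤ g i)
    (hg : HasSum g a) (ha : 0 ≤ a) : ∑' i, f i ≤ a := by
  by_cases hf : Summable f
  · exact hasSum_le hfg hf.hasSum hg
  · rw [tsum_eq_zero_of_not_summable hf]
    exact ha

/-- For `k ≥ 2`, `λ = k` is a global maximizer over `λ > 0` of `g_γ(λ)/λ`, where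
`g_γ(λ) = 2λ^k e^{-λ}/k! - λ^{k-1} e^{-λ}/(k-1)! - λ^{k+1} e^{-λ}/(k+1)!` is the
negative curvature of the Poisson pmf, with maximal value `k^{k-1} e^{-k}/((k+1)·k!)`;
consequently if `λ_x ≥ 0` sum to `n`, then `∑_x g_γ(λ_x) ≤ n·k^{k-1} e^{-k}/((k+1)·k!)`. -/
theorem curvature_test_bound (k : ℕ) (hk : 2 ≤ k) :
    (∀ l : ℝ, 0 < l →
      (2 * l ^ k * Real.exp (-l) / k.factorial
          - l ^ (k - 1) * Real.exp (-l) / (k - 1).factorial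
          - l ^ (k + 1) * Real.exp (-l) / (k + 1).factorial) / l
      ≤ (2 * (k : ℝ) ^ k * Real.exp (-(k : ℝ)) / k.factorial
          - (k : ℝ) ^ (k - 1) * Real.exp (-(k : ℝ)) / (k - 1).factorial
          - (k : ℝ) ^ (k + 1) * Real.exp (-(k : ℝ)) / (k + 1).factorial) / (k : ℝ))
    ∧ (2 * (k : ℝ) ^ k * Real.exp (-(k : ℝ)) / k.factorial
          - (k : ℝ) ^ (k - 1) * Real.exp (-(k : ℝ)) / (k - 1).factorial
          - (k : ℝ) ^ (k + 1) * Real.exp (-(k : ℝ)) / (k + 1).factorial) / (k : ℝ)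
        = (k : ℝ) ^ (k - 1) * Real.exp (-(k : ℝ)) / (((k : ℝ) + 1) * k.factorial)
    ∧ ∀ (X : Type) (_ : Countable X) (lam : X → ℝ) (n : ℝ),
        (∀ x, 0 ≤ lam x) → HasSum lam n →
        ∑' x, (2 * lam x ^ k * Real.exp (-lam x) / k.factorial
            - lam x ^ (k - 1) * Real.exp (-lam x) / (k - 1).factorial
            - lam x ^ (k + 1) * Real.exp (-lam x) / (k + 1).factorial)
          ≤ n * (k : ℝ) ^ (k - 1) * Real.exp (-(k : ℝ)) / (((k : ℝ) + 1) * k.factorial) := by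
  have hk1 : 1 ≤ k := by omega
  have hmax : 0 ≤ poissonCurvature k k / k := by rw [poissonCurvature_self_div hk1]; positivity
  refine ⟨fun l hl => ?_, poissonCurvature_self_div hk1, fun X _ lam n hlam hn => ?_⟩
  · rw [div_le_iff₀' hl]
    exact poissonCurvature_le_mul hk1 hl.le
  · rw [mul_assoc n, mul_div_assoc, ← poissonCurvature_self_div hk1]
    exact tsum_le_of_le_of_hasSum (fun x => poissonCurvature_le_mul hk1 (hlam x))
      (hn.mul_right _) (mul_nonneg (hn.nonneg hlam) hmax)
end

section
/- Let k ≥ 1 be an integer, X a countable index set, and (λ_x)_{x∈X} nonnegative reals such that μ_j := ∑_{x∈X} λ_x^j e^{−λ_x}/j! is finite for j = k−1, k, k+1. Then k·μ_k² ≤ (k+1)·μ_{k−1}·μ_{k+1}. Equivalently, when all three quantities are positive, the logarithmic curvature satisfies 2 ln μ_k − ln μ_{k−1} − ln μ_{k+1} ≤ ln((k+1)/k) ≤ 1/k. -/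
/-!
Pointwise the Poisson weights satisfy `P_λ(k)² = (k+1)/k · P_λ(k-1) · P_λ(k+1)`, the ratio being
independent of `λ`. Hence `P_λ(k)` is, up to the constant `√((k+1)/k)`, the geometric mean of its
two neighbours, and Cauchy–Schwarz for the sum over `x` gives `μ_k² ≤ (k+1)/k · μ_{k-1} μ_{k+1}`.
The logarithmic form follows by taking logarithms and using `log (1 + 1/k) ≤ 1/k`.
-/

open Real

lemma summable_and_tsum_sqrt_mul_sqrt_le {ι : Type*} {a b : ι → ℝ} (ha : ∀ i, 0 ≤ a i)
    (hb : ∀ i, 0 ≤ b i) (ha_sum : Summable a) (hb_sum : Summable b) :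
    (Summable fun i => √(a i) * √(b i)) ∧
      ∑' i, √(a i) * √(b i) ≤ √(∑' i, a i) * √(∑' i, b i) := by
  have hsq : ∀ {c : ι → ℝ}, (∀ i, 0 ≤ c i) → (fun i => √(c i) ^ (2 : ℝ)) = c := fun hc =>
    funext fun i => by rw [Real.rpow_two, Real.sq_sqrt (hc i)]
  have := Real.summable_and_inner_le_Lp_mul_Lq_tsum_of_nonneg Real.HolderConjugate.two_two
    (fun i => Real.sqrt_nonneg (a i)) (fun i => Real.sqrt_nonneg (b i))
    (by rwa [hsq ha]) (by rwa [hsq hb])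
  simpa only [hsq ha, hsq hb, ← Real.sqrt_eq_rpow] using this

lemma sq_tsum_le_tsum_mul_tsum_of_sq_le_mul {ι : Type*} {p a b : ι → ℝ} (hp : ∀ i, 0 ≤ p i)
    (ha : ∀ i, 0 ≤ a i) (hb : ∀ i, 0 ≤ b i) (ha_sum : Summable a) (hb_sum : Summable b)
    (hpab : ∀ i, p i ^ 2 ≤ a i * b i) :
    (∑' i, p i) ^ 2 ≤ (∑' i, a i) * ∑' i, b i := by
  obtain ⟨hsum, hle⟩ := summable_and_tsum_sqrt_mul_sqrt_le ha hb ha_sum hb_sum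
  have hp_le : ∀ i, p i ≤ √(a i) * √(b i) := fun i => by
    rw [← Real.sqrt_mul (ha i)]
    exact Real.le_sqrt_of_sq_le (hpab i)
  calc (∑' i, p i) ^ 2 ≤ (√(∑' i, a i) * √(∑' i, b i)) ^ 2 := by
        gcongr
        · exact tsum_nonneg hp
        · exact (Summable.tsum_le_tsum hp_le (hsum.of_nonneg_of_le hp hp_le) hsum).trans hle
    _ = (∑' i, a i) * ∑' i, b i := by
        rw [mul_pow, Real.sq_sqrt (tsum_nonneg ha), Real.sq_sqrt (tsum_nonneg hb)]

lemma poisson_term_sq (l : ℝ) (n : ℕ) :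
    (l ^ (n + 1) * exp (-l) / (n + 1).factorial) ^ 2
      = (l ^ n * exp (-l) / n.factorial)
        * ((n + 2) / (n + 1) * (l ^ (n + 2) * exp (-l) / (n + 2).factorial)) := by
  simp only [Nat.factorial_succ]
  push_cast
  field_simp
  ring

lemma two_mul_log_sub_log_sub_log_le {a b c r : ℝ} (ha : 0 < a) (hb : 0 < b) (hc : 0 < c)
    (h : c ^ 2 ≤ r * (a * b)) :
    2 * log c - log a - log b ≤ log r := by
  have hr : 0 < r := pos_of_mul_pos_left ((pow_pos hc 2).trans_le h) (mul_pos ha hb).le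
  have := Real.log_le_log (by positivity) h
  rw [Real.log_pow, Real.log_mul hr.ne' (by positivity), Real.log_mul ha.ne' hb.ne'] at this
  push_cast at this
  linarith

lemma log_add_one_div_self_le_one_div (k : ℝ) (hk : 0 < k) : log ((k + 1) / k) ≤ 1 / k := by
  calc log ((k + 1) / k) ≤ (k + 1) / k - 1 := Real.log_le_sub_one_of_pos (by positivity)
    _ = 1 / k := by field_simp; ring

theorem log_curvature_bound_general
    (k : ℕ) (hk : 1 ≤ k) (X : Type*) (lam : X → ℝ) (hlam : ∀ x, 0 ≤ lam x)
    (hsummable : ∀ j : ℕ, (j = k - 1 ∨ j = k ∨ j = k + 1) →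
      Summable (fun x => lam x ^ j * Real.exp (-lam x) / j.factorial)) :
    (k : ℝ) * (∑' x, lam x ^ k * Real.exp (-lam x) / k.factorial) ^ 2
      ≤ ((k : ℝ) + 1) * (∑' x, lam x ^ (k - 1) * Real.exp (-lam x) / (k - 1).factorial)
        * (∑' x, lam x ^ (k + 1) * Real.exp (-lam x) / (k + 1).factorial)
    ∧ ((0 < ∑' x, lam x ^ (k - 1) * Real.exp (-lam x) / (k - 1).factorial) →
       (0 < ∑' x, lam x ^ k * Real.exp (-lam x) / k.factorial) →
       (0 < ∑' x, lam x ^ (k + 1) * Real.exp (-lam x) / (k + 1).factorial) →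
        2 * Real.log (∑' x, lam x ^ k * Real.exp (-lam x) / k.factorial)
          - Real.log (∑' x, lam x ^ (k - 1) * Real.exp (-lam x) / (k - 1).factorial)
          - Real.log (∑' x, lam x ^ (k + 1) * Real.exp (-lam x) / (k + 1).factorial)
        ≤ Real.log (((k : ℝ) + 1) / k) ∧ Real.log (((k : ℝ) + 1) / k) ≤ 1 / k) := by
  obtain ⟨m, rfl⟩ : ∃ m, k = m + 1 := ⟨k - 1, by omega⟩
  simp only [Nat.add_sub_cancel] at hsummable ⊢
  have hterm : ∀ (j : ℕ) (x : X), 0 ≤ lam x ^ j * exp (-lam x) / j.factorial := fun j x => by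
    have := hlam x
    positivity
  have hCS := sq_tsum_le_tsum_mul_tsum_of_sq_le_mul (hterm (m + 1)) (hterm m)
    (fun x => by have := hterm (m + 2) x; positivity)
    (hsummable m (by simp)) ((hsummable (m + 2) (by simp)).mul_left _)
    (fun x => (poisson_term_sq (lam x) m).le)
  rw [tsum_mul_left] at hCS
  have hratio : ((m + 1 : ℕ) : ℝ) + 1 = (m + 1) * ((m + 2) / (m + 1)) := by
    push_cast
    field_simp
    ring
  have hbound : ((m + 1 : ℕ) : ℝ) * (∑' x, lam x ^ (m + 1) * exp (-lam x) / (m + 1).factorial) ^ 2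
      ≤ (((m + 1 : ℕ) : ℝ) + 1) * (∑' x, lam x ^ m * exp (-lam x) / m.factorial)
        * ∑' x, lam x ^ (m + 2) * exp (-lam x) / (m + 2).factorial := by
    rw [hratio]
    push_cast
    linear_combination (↑m + 1) * hCS
  refine ⟨hbound, fun ha hc hb => ⟨two_mul_log_sub_log_sub_log_le ha hb hc ?_,
    log_add_one_div_self_le_one_div _ (by positivity)⟩⟩
  rw [div_mul_eq_mul_div, le_div_iff₀ (by positivity)]
  linarith

/-- Logarithmic curvature bound: for `k ≥ 1` and `μ_j := ∑_x λ_x^j e^{-λ_x}/j!` finite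
for `j = k-1, k, k+1`, one has `k·μ_k² ≤ (k+1)·μ_{k-1}·μ_{k+1}`; equivalently, when all
three are positive, `2 ln μ_k - ln μ_{k-1} - ln μ_{k+1} ≤ ln((k+1)/k) ≤ 1/k`. -/
theorem log_curvature_bound
    (k : ℕ) (hk : 1 ≤ k) (X : Type*) [Countable X] (lam : X → ℝ) (hlam : ∀ x, 0 ≤ lam x)
    (hsummable : ∀ j : ℕ, (j = k - 1 ∨ j = k ∨ j = k + 1) →
      Summable (fun x => lam x ^ j * Real.exp (-lam x) / j.factorial)) :
    (k : ℝ) * (∑' x, lam x ^ k * Real.exp (-lam x) / k.factorial) ^ 2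
      ≤ ((k : ℝ) + 1) * (∑' x, lam x ^ (k - 1) * Real.exp (-lam x) / (k - 1).factorial)
        * (∑' x, lam x ^ (k + 1) * Real.exp (-lam x) / (k + 1).factorial)
    ∧ ((0 < ∑' x, lam x ^ (k - 1) * Real.exp (-lam x) / (k - 1).factorial) →
       (0 < ∑' x, lam x ^ k * Real.exp (-lam x) / k.factorial) →
       (0 < ∑' x, lam x ^ (k + 1) * Real.exp (-lam x) / (k + 1).factorial) →
        2 * Real.log (∑' x, lam x ^ k * Real.exp (-lam x) / k.factorial)
          - Real.log (∑' x, lam x ^ (k - 1) * Real.exp (-lam x) / (k - 1).factorial)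
          - Real.log (∑' x, lam x ^ (k + 1) * Real.exp (-lam x) / (k + 1).factorial)
        ≤ Real.log (((k : ℝ) + 1) / k) ∧ Real.log (((k : ℝ) + 1) / k) ≤ 1 / k) :=
  log_curvature_bound_general k hk X lam hlam hsummable
end

section
/- Let X and K be finite index sets and let (Z_k^x)_{k∈K, x∈X} be random variables with values in [0,1] such that (i) the families (Z_k^x)_{k∈K}, indexed by x, are independent across x ∈ X, and (ii) E[Z_k^x Z_{k'}^x] = 0 for all x ∈ X and all k ≠ k'. Set Z_k^+ := ∑_{x∈X} Z_k^x. Then for all reals (α_k)_{k∈K}: Var[∑_{k∈K} α_k Z_k^+] ≤ ∑_{k∈K} α_k² E[Z_k^+]. -/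
open MeasureTheory ProbabilityTheory

/-! Writing `S_x := ∑_k α_k Z_k^x`, the variable `∑_k α_k Z_k^+` is `∑_x S_x`, a sum of independent
variables, so its variance is `∑_x Var[S_x]`. Each `Var[S_x]` is at most `E[S_x²]`, which by the
orthogonality of the `Z_k^x` for fixed `x` equals `∑_k α_k² E[(Z_k^x)²]`, and `(Z_k^x)² ≤ Z_k^x`
since `Z_k^x ∈ [0,1]`. -/

section
variable {Ω : Type*} [MeasurableSpace Ω] {μ : Measure Ω}

lemma integral_sq_le_integral_of_mem_Icc {Y : Ω → ℝ} (hY : Integrable Y μ)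
    (h01 : ∀ᵐ ω ∂μ, Y ω ∈ Set.Icc (0 : ℝ) 1) : ∫ ω, Y ω ^ 2 ∂μ ≤ ∫ ω, Y ω ∂μ :=
  integral_mono_of_nonneg (.of_forall fun _ => sq_nonneg _) hY
    (h01.mono fun _ h => pow_le_of_le_one h.1 h.2 two_ne_zero)

lemma integral_sq_sum_mul_of_orthogonal {ι : Type*} [Fintype ι] {Y : ι → Ω → ℝ}
    (hY : ∀ i, MemLp (Y i) 2 μ) (horth : ∀ i j, i ≠ j → ∫ ω, Y i ω * Y j ω ∂μ = 0)
    (a : ι → ℝ) :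
    ∫ ω, (∑ i, a i * Y i ω) ^ 2 ∂μ = ∑ i, a i ^ 2 * ∫ ω, Y i ω ^ 2 ∂μ := by
  classical
  have hprod : ∀ i j, Integrable (fun ω => a i * a j * (Y i ω * Y j ω)) μ :=
    fun i j => ((hY i).integrable_mul (hY j)).const_mul _
  calc ∫ ω, (∑ i, a i * Y i ω) ^ 2 ∂μ
      = ∫ ω, ∑ i, ∑ j, a i * a j * (Y i ω * Y j ω) ∂μ := by
        congr with ω
        rw [sq, Finset.sum_mul_sum]
        simp only [mul_mul_mul_comm]
    _ = ∑ i, ∑ j, a i * a j * ∫ ω, Y i ω * Y j ω ∂μ := by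
        rw [integral_finsetSum _ fun i _ => integrable_finsetSum _ fun j _ => hprod i j]
        simp_rw [integral_finsetSum _ fun j _ => hprod _ j, integral_const_mul]
    _ = ∑ i, a i ^ 2 * ∫ ω, Y i ω ^ 2 ∂μ := by
        refine Finset.sum_congr rfl fun i _ => ?_
        rw [Finset.sum_eq_single i (fun j _ hji => by rw [horth i j hji.symm, mul_zero])
          (by simp)]
        simp only [sq]

lemma variance_sum_mul_le_of_orthogonal [IsProbabilityMeasure μ] {ι : Type*} [Fintype ι]
    {Y : ι → Ω → ℝ} (hY : ∀ i, AEStronglyMeasurable (Y i) μ)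
    (h01 : ∀ i, ∀ᵐ ω ∂μ, Y i ω ∈ Set.Icc (0 : ℝ) 1)
    (horth : ∀ i j, i ≠ j → ∫ ω, Y i ω * Y j ω ∂μ = 0) (a : ι → ℝ) :
    variance (fun ω => ∑ i, a i * Y i ω) μ ≤ ∑ i, a i ^ 2 * ∫ ω, Y i ω ∂μ := by
  have hL2 : ∀ i, MemLp (Y i) 2 μ := fun i => memLp_of_bounded (h01 i) (hY i) 2
  calc variance (fun ω => ∑ i, a i * Y i ω) μ
      ≤ ∫ ω, (∑ i, a i * Y i ω) ^ 2 ∂μ :=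
        variance_le_expectation_sq (Finset.aestronglyMeasurable_fun_sum _ fun i _ =>
          (hY i).const_mul _)
    _ = ∑ i, a i ^ 2 * ∫ ω, Y i ω ^ 2 ∂μ := integral_sq_sum_mul_of_orthogonal hL2 horth a
    _ ≤ ∑ i, a i ^ 2 * ∫ ω, Y i ω ∂μ := Finset.sum_le_sum fun i _ =>
        mul_le_mul_of_nonneg_left
          (integral_sq_le_integral_of_mem_Icc ((hL2 i).integrable one_le_two) (h01 i))
          (sq_nonneg _)

end

/-- Double collection of (un)correlated random variables, part (a): if the `[0,1]`-valued
variables `Z_k^x` have families `(Z_k^x)_k` independent across `x` and satisfy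
`E[Z_k^x Z_{k'}^x] = 0` for `k ≠ k'`, then with `Z_k^+ := ∑_x Z_k^x`,
`Var[∑_k α_k Z_k^+] ≤ ∑_k α_k² E[Z_k^+]`. -/
theorem variance_double_collection
    (Ω : Type*) [MeasurableSpace Ω] (μ : Measure Ω) [IsProbabilityMeasure μ]
    (X K : Type*) [Fintype X] [Fintype K]
    (Z : K → X → Ω → ℝ) (hmeas : ∀ k x, Measurable (Z k x))
    (hrange : ∀ k x ω, Z k x ω ∈ Set.Icc (0 : ℝ) 1)
    (hindep : iIndepFun (β := fun _ : X => K → ℝ)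
      (fun x ω k => Z k x ω) μ)
    (horth : ∀ x k k', k ≠ k' → ∫ ω, Z k x ω * Z k' x ω ∂μ = 0)
    (α : K → ℝ) :
    variance (fun ω => ∑ k, α k * ∑ x, Z k x ω) μ
      ≤ ∑ k, (α k) ^ 2 * ∫ ω, ∑ x, Z k x ω ∂μ := by
  have hZ_L2 : ∀ k x, MemLp (Z k x) 2 μ := fun k x =>
    memLp_of_bounded (.of_forall (hrange k x)) (hmeas k x).aestronglyMeasurable 2
  set S : X → Ω → ℝ := fun x ω => ∑ k, α k * Z k x ω
  have hS_indep : Set.Pairwise ↑(Finset.univ : Finset X) fun x y => S x ⟂ᵢ[μ] S y :=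
    fun x _ y _ hxy => (hindep.comp (fun _ f => ∑ k, α k * f k) fun _ => by fun_prop).indepFun hxy
  have hS_L2 : ∀ x, MemLp (S x) 2 μ := fun x => memLp_finsetSum _ fun k _ =>
    (hZ_L2 k x).const_mul _
  have hsum : (fun ω => ∑ k, α k * ∑ x, Z k x ω) = ∑ x, S x := by
    ext ω
    simp only [S, Finset.sum_apply, Finset.mul_sum]
    exact Finset.sum_comm
  calc variance (fun ω => ∑ k, α k * ∑ x, Z k x ω) μ
      = ∑ x, variance (S x) μ := by rw [hsum, IndepFun.variance_sum (fun x _ => hS_L2 x) hS_indep]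
    _ ≤ ∑ x, ∑ k, α k ^ 2 * ∫ ω, Z k x ω ∂μ := Finset.sum_le_sum fun x _ =>
        variance_sum_mul_le_of_orthogonal (fun k => (hmeas k x).aestronglyMeasurable)
          (fun k => .of_forall (hrange k x)) (horth x) α
    _ = ∑ k, α k ^ 2 * ∫ ω, ∑ x, Z k x ω ∂μ := by
        rw [Finset.sum_comm]
        refine Finset.sum_congr rfl fun k _ => ?_
        rw [← Finset.mul_sum, integral_finsetSum _ fun x _ =>
          (hZ_L2 k x).integrable one_le_two]
end

section
/- Let X and K be finite index sets and let (Z_k^x)_{k∈K, x∈X} be random variables with values in [0,1] such that Z_k^x Z_{k'}^x = 0 almost surely for all x ∈ X and all k ≠ k'. Set Z_k^+ := ∑_{x∈X} Z_k^x. Then for all reals (α_k)_{k∈K}: ∑_{x∈X} E[ |∑_{k∈K} α_k (Z_k^x − E[Z_k^x])|³ ] ≤ 8·∑_{k∈K} |α_k|³ E[Z_k^+]. -/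
/-!
Write `Y := ∑_k α_k Z_k^x`. Centering costs at most a factor 8 in the third absolute moment:
`|Y - E Y|³ ≤ 4|Y|³ + 4|E Y|³` and `|E Y|³ ≤ E|Y|³` by Jensen. Since at most one `Z_k^x` is
nonzero at a time and `z³ ≤ z` on `[0,1]`, `|Y|³ ≤ ∑_k |α_k|³ Z_k^x` almost surely. Summing over
`x` gives the theorem.
-/

open MeasureTheory Finset

lemma abs_sub_pow_three_le (a b : ℝ) : |a - b| ^ 3 ≤ 4 * |a| ^ 3 + 4 * |b| ^ 3 :=
  calc |a - b| ^ 3 ≤ (|a| + |b|) ^ 3 := by gcongr; exact abs_sub a b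
    _ ≤ 4 * |a| ^ 3 + 4 * |b| ^ 3 := by
      nlinarith [sq_nonneg (|a| - |b|), abs_nonneg a, abs_nonneg b,
        mul_nonneg (abs_nonneg a) (abs_nonneg b)]

lemma abs_sum_mul_pow_le_sum_abs_pow_mul {K : Type*} [Fintype K] (α z : K → ℝ) {n : ℕ}
    (hn : n ≠ 0) (hz : ∀ k, z k ∈ Set.Icc (0 : ℝ) 1)
    (hdisj : Pairwise fun k k' => z k * z k' = 0) :
    |∑ k, α k * z k| ^ n ≤ ∑ k, |α k| ^ n * z k := by
  have hterm_nonneg : ∀ k ∈ univ, 0 ≤ |α k| ^ n * z k :=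
    fun k _ => mul_nonneg (by positivity) (hz k).1
  by_cases h : ∃ k₀, z k₀ ≠ 0
  · obtain ⟨k₀, hk₀⟩ := h
    have hsum : ∑ k, α k * z k = α k₀ * z k₀ :=
      sum_eq_single k₀
        (fun k _ hk => by rw [(mul_eq_zero.1 (hdisj hk)).resolve_right hk₀, mul_zero])
        (absurd (mem_univ k₀))
    calc |∑ k, α k * z k| ^ n = |α k₀| ^ n * z k₀ ^ n := by
          rw [hsum, abs_mul, mul_pow, abs_of_nonneg (hz k₀).1]
      _ ≤ |α k₀| ^ n * z k₀ := by gcongr; exact pow_le_of_le_one (hz k₀).1 (hz k₀).2 hn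
      _ ≤ ∑ k, |α k| ^ n * z k :=
          single_le_sum (f := fun k => |α k| ^ n * z k) hterm_nonneg (mem_univ k₀)
  · simp only [not_exists, not_not] at h
    rw [sum_eq_zero fun k _ => by rw [h k, mul_zero], abs_zero, zero_pow hn]
    exact sum_nonneg hterm_nonneg

lemma integrable_of_mem_Icc {Ω : Type*} [MeasurableSpace Ω] {μ : Measure Ω} [IsFiniteMeasure μ]
    {f : Ω → ℝ} (hf : Measurable f) (hrange : ∀ ω, f ω ∈ Set.Icc (0 : ℝ) 1) : Integrable f μ :=
  Integrable.of_bound hf.aestronglyMeasurable 1 (ae_of_all _ fun ω => by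
    rw [Real.norm_eq_abs, abs_of_nonneg (hrange ω).1]; exact (hrange ω).2)

section Moments

variable {Ω : Type*} [MeasurableSpace Ω] {μ : Measure Ω} [IsProbabilityMeasure μ]

lemma abs_integral_pow_le_integral_abs_pow {Y : Ω → ℝ} (n : ℕ) (hY : Integrable Y μ)
    (hYn : Integrable (fun ω => |Y ω| ^ n) μ) :
    |∫ ω, Y ω ∂μ| ^ n ≤ ∫ ω, |Y ω| ^ n ∂μ :=
  calc |∫ ω, Y ω ∂μ| ^ n ≤ (∫ ω, |Y ω| ∂μ) ^ n := by
        gcongr; exact abs_integral_le_integral_abs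
    _ ≤ ∫ ω, |Y ω| ^ n ∂μ :=
        (convexOn_pow n).map_integral_le (continuousOn_pow n) isClosed_Ici
          (ae_of_all _ fun ω => abs_nonneg (Y ω)) hY.abs hYn

lemma integral_abs_sub_integral_pow_three_le {Y : Ω → ℝ} (hY : Integrable Y μ)
    (hY3 : Integrable (fun ω => |Y ω| ^ 3) μ) :
    ∫ ω, |Y ω - ∫ ω', Y ω' ∂μ| ^ 3 ∂μ ≤ 8 * ∫ ω, |Y ω| ^ 3 ∂μ := by
  set c := ∫ ω', Y ω' ∂μ
  have hbound : Integrable (fun ω => 4 * |Y ω| ^ 3 + 4 * |c| ^ 3) μ :=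
    (hY3.const_mul 4).add (integrable_const _)
  have hint : Integrable (fun ω => |Y ω - c| ^ 3) μ :=
    hbound.mono' ((continuous_abs.comp_aestronglyMeasurable
      (hY.sub (integrable_const c)).aestronglyMeasurable).pow 3)
      (ae_of_all _ fun ω => by
        rw [Real.norm_eq_abs, abs_of_nonneg (by positivity)]
        exact abs_sub_pow_three_le _ _)
  calc ∫ ω, |Y ω - c| ^ 3 ∂μ ≤ ∫ ω, (4 * |Y ω| ^ 3 + 4 * |c| ^ 3) ∂μ :=
        integral_mono hint hbound fun ω => abs_sub_pow_three_le _ _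
    _ = 4 * ∫ ω, |Y ω| ^ 3 ∂μ + 4 * |c| ^ 3 := by
        rw [integral_add (hY3.const_mul 4) (integrable_const _), integral_const_mul,
          integral_const, probReal_univ, one_smul]
    _ ≤ 8 * ∫ ω, |Y ω| ^ 3 ∂μ := by
        linarith [abs_integral_pow_le_integral_abs_pow 3 hY hY3]

lemma integral_abs_sum_mul_sub_integral_pow_three_le {K : Type*} [Fintype K]
    {Z : K → Ω → ℝ} (hmeas : ∀ k, Measurable (Z k))
    (hrange : ∀ k ω, Z k ω ∈ Set.Icc (0 : ℝ) 1)
    (hprod : ∀ k k', k ≠ k' → ∀ᵐ ω ∂μ, Z k ω * Z k' ω = 0) (α : K → ℝ) :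
    ∫ ω, |∑ k, α k * (Z k ω - ∫ ω', Z k ω' ∂μ)| ^ 3 ∂μ
      ≤ 8 * ∑ k, |α k| ^ 3 * ∫ ω, Z k ω ∂μ := by
  have hZ : ∀ k, Integrable (Z k) μ := fun k => integrable_of_mem_Icc (hmeas k) (hrange k)
  set Y : Ω → ℝ := fun ω => ∑ k, α k * Z k ω
  have hY : Integrable Y μ := integrable_finsetSum _ fun k _ => (hZ k).const_mul _
  have hdom : Integrable (fun ω => ∑ k, |α k| ^ 3 * Z k ω) μ :=
    integrable_finsetSum _ fun k _ => (hZ k).const_mul _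
  have hdisj : ∀ᵐ ω ∂μ, Pairwise fun k k' => Z k ω * Z k' ω = 0 :=
    ae_all_iff.2 fun k => ae_all_iff.2 fun k' => Filter.eventually_imp_distrib_left.2 (hprod k k')
  have hpointwise : ∀ᵐ ω ∂μ, |Y ω| ^ 3 ≤ ∑ k, |α k| ^ 3 * Z k ω := by
    filter_upwards [hdisj] with ω hω
    exact abs_sum_mul_pow_le_sum_abs_pow_mul α (Z · ω) three_ne_zero (hrange · ω) hω
  have hY3 : Integrable (fun ω => |Y ω| ^ 3) μ :=
    hdom.mono' ((continuous_abs.comp_aestronglyMeasurable hY.aestronglyMeasurable).pow 3) (by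
      filter_upwards [hpointwise] with ω hω
      rwa [Real.norm_eq_abs, abs_of_nonneg (by positivity)])
  have hcenter : ∀ ω, ∑ k, α k * (Z k ω - ∫ ω', Z k ω' ∂μ) = Y ω - ∫ ω', Y ω' ∂μ := by
    intro ω
    simp only [Y, integral_finsetSum _ fun k _ => (hZ k).const_mul (α k), integral_const_mul,
      mul_sub, sum_sub_distrib]
  calc ∫ ω, |∑ k, α k * (Z k ω - ∫ ω', Z k ω' ∂μ)| ^ 3 ∂μ
        = ∫ ω, |Y ω - ∫ ω', Y ω' ∂μ| ^ 3 ∂μ := by simp only [hcenter]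
    _ ≤ 8 * ∫ ω, |Y ω| ^ 3 ∂μ := integral_abs_sub_integral_pow_three_le hY hY3
    _ ≤ 8 * ∫ ω, ∑ k, |α k| ^ 3 * Z k ω ∂μ := by
        gcongr 8 * ?_; exact integral_mono_ae hY3 hdom hpointwise
    _ = 8 * ∑ k, |α k| ^ 3 * ∫ ω, Z k ω ∂μ := by
        rw [integral_finsetSum _ fun k _ => (hZ k).const_mul _]
        simp only [integral_const_mul]

end Moments

/-- Double collection of random variables, part (b): if the `[0,1]`-valued variables
`Z_k^x` satisfy `Z_k^x Z_{k'}^x = 0` a.s. for `k ≠ k'`, then with `Z_k^+ := ∑_x Z_k^x`,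
`∑_x E[|∑_k α_k (Z_k^x - E[Z_k^x])|³] ≤ 8 ∑_k |α_k|³ E[Z_k^+]`. -/
theorem third_moment_double_collection
    (Ω : Type*) [MeasurableSpace Ω] (μ : Measure Ω) [IsProbabilityMeasure μ]
    (X K : Type*) [Fintype X] [Fintype K]
    (Z : K → X → Ω → ℝ) (hmeas : ∀ k x, Measurable (Z k x))
    (hrange : ∀ k x ω, Z k x ω ∈ Set.Icc (0 : ℝ) 1)
    (hprod : ∀ x k k', k ≠ k' → ∀ᵐ ω ∂μ, Z k x ω * Z k' x ω = 0)
    (α : K → ℝ) :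
    ∑ x, ∫ ω, |∑ k, α k * (Z k x ω - ∫ ω', Z k x ω' ∂μ)| ^ 3 ∂μ
      ≤ 8 * ∑ k, |α k| ^ 3 * ∫ ω, ∑ x, Z k x ω ∂μ := by
  have hZ : ∀ k x, Integrable (Z k x) μ := fun k x =>
    integrable_of_mem_Icc (hmeas k x) (hrange k x)
  calc ∑ x, ∫ ω, |∑ k, α k * (Z k x ω - ∫ ω', Z k x ω' ∂μ)| ^ 3 ∂μ
      ≤ ∑ x, 8 * ∑ k, |α k| ^ 3 * ∫ ω, Z k x ω ∂μ := sum_le_sum fun x _ =>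
        integral_abs_sum_mul_sub_integral_pow_three_le (fun k => hmeas k x)
          (fun k => hrange k x) (hprod x) α
    _ = 8 * ∑ k, |α k| ^ 3 * ∫ ω, ∑ x, Z k x ω ∂μ := by
        rw [← mul_sum, sum_comm]
        simp only [integral_finsetSum _ fun x _ => hZ _ x, mul_sum]
end

section
/- Let X be a countable index set, n > 0 a real number, (λ_x)_{x∈X} nonnegative reals with ∑_x λ_x = n, and (N_x)_{x∈X} independent random variables with N_x ~ Poisson(λ_x). For k ≥ 1 let M_k := #{x : N_x = k}, and for reals (α_k)_{k≥1} define T := ∑_{k≥1} α_k M_k and T_x := ∑_{k≥1} α_k 1{N_x = k}. Let c > 0. Then: (i) if α_k ≤ c·k for all k ≥ 1, then E[T] ≤ c·n; (ii) if α_k² ≤ c·k for all k ≥ 1, then Var[T] ≤ c·n; (iii) if |α_k|³ ≤ c·k for all k ≥ 1, then ∑_{x∈X} E[|T_x − E[T_x]|³] ≤ 8c·n. -/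
/-!
Only the means `E[N_x] = λ_x` of the Poisson counts enter. Writing `T_x = β (N_x)` with
`β 0 = 0`, a bound `|β k|^p ≤ c k` turns into `E[|T_x|^p] ≤ c λ_x`, and summing over `x`
gives `c n`.
For the variance, independence makes the variance of a finite partial sum the sum of the
variances, and Fatou's lemma carries this to `T`, which converges almost surely since
`∑ E|T_x| < ∞`. For the third moments, Minkowski's inequality gives
`‖T_x - E[T_x]‖₃ ≤ 2 ‖T_x‖₃`, whence the factor `8 = 2³`.
-/

open MeasureTheory Filter Topology ProbabilityTheory
open scoped ENNReal NNReal

theorem ENNReal.ofReal_tsum_le {ι : Type*} (f : ι → ℝ) :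
    ENNReal.ofReal (∑' i, f i) ≤ ∑' i, ENNReal.ofReal (f i) := by
  by_cases hf : Summable f
  · have hpos : Summable fun i => max (f i) 0 :=
      hf.abs.of_nonneg_of_le (fun i => le_max_right _ _)
        (fun i => max_le (le_abs_self _) (abs_nonneg _))
    calc ENNReal.ofReal (∑' i, f i) ≤ ENNReal.ofReal (∑' i, max (f i) 0) :=
          ENNReal.ofReal_le_ofReal (hf.tsum_le_tsum (fun i => le_max_left _ _) hpos)
      _ = ∑' i, ENNReal.ofReal (max (f i) 0) :=
          ENNReal.ofReal_tsum_of_nonneg (fun i => le_max_right _ _) hpos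
      _ = ∑' i, ENNReal.ofReal (f i) := by simp
  · simp [tsum_eq_zero_of_not_summable hf]

theorem Real.enorm_pow_eq_ofReal_abs_pow (t : ℝ) (p : ℕ) :
    ‖t‖ₑ ^ p = ENNReal.ofReal (|t| ^ p) := by
  rw [Real.enorm_eq_ofReal_abs, ENNReal.ofReal_pow (abs_nonneg t)]

theorem abs_le_one_add_mul_of_abs_pow_le {b c : ℝ} {k p : ℕ} (hp : p ≠ 0)
    (h : |b| ^ p ≤ c * k) : |b| ≤ (1 + c) * k := by
  rcases Nat.eq_zero_or_pos k with rfl | hk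
  · simp only [Nat.cast_zero, mul_zero] at h ⊢
    exact ((pow_eq_zero_iff hp).mp (le_antisymm h (by positivity))).le
  · have hk1 : (1 : ℝ) ≤ k := by exact_mod_cast hk
    have hb : |b| ≤ 1 + |b| ^ p := by
      rcases le_total |b| 1 with h1 | h1
      · linarith [pow_nonneg (abs_nonneg b) p]
      · linarith [le_self_pow₀ h1 hp]
    nlinarith

namespace MeasureTheory

variable {Ω : Type*} [MeasurableSpace Ω] {μ : Measure Ω}

theorem integral_le_toReal_lintegral_ofReal (f : Ω → ℝ) :
    ∫ ω, f ω ∂μ ≤ (∫⁻ ω, ENNReal.ofReal (f ω) ∂μ).toReal := by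
  by_cases hf : Integrable f μ
  · rw [integral_eq_lintegral_pos_part_sub_lintegral_neg_part hf]
    exact sub_le_self _ ENNReal.toReal_nonneg
  · rw [integral_undef hf]
    exact ENNReal.toReal_nonneg

theorem integral_tsum_le_of_tsum_lintegral_ofReal_le {ι : Type*} [Countable ι]
    {Y : ι → Ω → ℝ} (hY : ∀ i, AEMeasurable (Y i) μ) {b : ℝ} (hb : 0 ≤ b)
    (h : ∑' i, ∫⁻ ω, ENNReal.ofReal (Y i ω) ∂μ ≤ ENNReal.ofReal b) :
    ∫ ω, ∑' i, Y i ω ∂μ ≤ b := by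
  refine (integral_le_toReal_lintegral_ofReal _).trans (ENNReal.toReal_le_of_le_ofReal hb ?_)
  calc ∫⁻ ω, ENNReal.ofReal (∑' i, Y i ω) ∂μ
      ≤ ∫⁻ ω, ∑' i, ENNReal.ofReal (Y i ω) ∂μ := lintegral_mono fun ω => ENNReal.ofReal_tsum_le _
    _ = ∑' i, ∫⁻ ω, ENNReal.ofReal (Y i ω) ∂μ :=
        lintegral_tsum fun i => (hY i).ennreal_ofReal
    _ ≤ ENNReal.ofReal b := h

end MeasureTheory

namespace ProbabilityTheory

theorem hasSum_mul_poissonMeasure (r : ℝ≥0) :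
    HasSum (fun n : ℕ => Real.exp (-r) * r ^ n / n.factorial * n) r := by
  refine (hasSum_nat_add_iff' 1).mp ?_
  convert! (hasSum_one_poissonMeasure r).mul_left (r : ℝ) using 1
  · funext n
    rw [Nat.factorial_succ]
    push_cast
    field_simp
    ring
  · simp

theorem lintegral_natCast_poissonMeasure (r : ℝ≥0) :
    ∫⁻ n, (n : ℝ≥0∞) ∂poissonMeasure r = r := by
  have h := hasSum_mul_poissonMeasure r
  calc ∫⁻ n, (n : ℝ≥0∞) ∂poissonMeasure r
      = ∑' n : ℕ, ENNReal.ofReal (Real.exp (-r) * r ^ n / n.factorial * n) := by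
        rw [lintegral_countable']
        refine tsum_congr fun n => ?_
        rw [poissonMeasure_singleton, ENNReal.ofReal_mul (by positivity), ENNReal.ofReal_natCast,
          mul_comm]
    _ = r := by
        rw [← ENNReal.ofReal_tsum_of_nonneg (fun n => by positivity) h.summable, h.tsum_eq,
          ENNReal.ofReal_coe_nnreal]

theorem hasLaw_poissonMeasure_of_measure_eq {Ω : Type*} [MeasurableSpace Ω] {μ : Measure Ω}
    {N : Ω → ℕ} (hN : Measurable N) {l : ℝ} (hl : 0 ≤ l)
    (h : ∀ k, μ {ω | N ω = k} = ENNReal.ofReal (l ^ k * Real.exp (-l) / k.factorial)) :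
    HasLaw N (poissonMeasure l.toNNReal) μ where
  aemeasurable := hN.aemeasurable
  map_eq := Measure.ext_of_singleton fun k => by
    rw [Measure.map_apply hN (measurableSet_singleton k), poissonMeasure_singleton,
      Real.coe_toNNReal l hl, mul_comm (Real.exp _)]
    exact h k

variable {Ω : Type*} [MeasurableSpace Ω] {μ : Measure Ω}

theorem evariance_le_lintegral_enorm_sub_sq [IsProbabilityMeasure μ] {Y : Ω → ℝ}
    (hY : AEStronglyMeasurable Y μ) (a : ℝ) :
    evariance Y μ ≤ ∫⁻ ω, ‖Y ω - a‖ₑ ^ 2 ∂μ := by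
  have hshift : evariance Y μ = evariance (fun ω => Y ω - a) μ := by
    by_cases hY2 : MemLp Y 2 μ
    · rw [← ofReal_variance hY2, ← variance_sub_const hY a,
        ofReal_variance (X := fun ω => Y ω - a) (hY2.sub (memLp_const a))]
    · have hYa : ¬ MemLp (fun ω => Y ω - a) 2 μ := fun h =>
        hY2 (by convert h.add (memLp_const a) using 1; ext; simp)
      rw [evariance_eq_top hY hY2, evariance_eq_top (by fun_prop) hYa]
  rw [hshift, evariance_def' (by fun_prop)]
  exact tsub_le_self

theorem evariance_finset_sum [IsProbabilityMeasure μ] {ι : Type*} {Y : ι → Ω → ℝ}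
    (hind : iIndepFun Y μ) (hY : ∀ i, MemLp (Y i) 2 μ) (s : Finset ι) :
    evariance (∑ i ∈ s, Y i) μ = ∑ i ∈ s, evariance (Y i) μ := by
  rw [← ofReal_variance (memLp_finsetSum' s fun i _ => hY i),
    IndepFun.variance_sum (fun i _ => hY i) fun i _ j _ hij => hind.indepFun hij,
    ENNReal.ofReal_sum_of_nonneg fun i _ => variance_nonneg _ _]
  exact Finset.sum_congr rfl fun i _ => ofReal_variance (hY i)

theorem evariance_tsum_le [IsProbabilityMeasure μ] {ι : Type*} [Countable ι]
    {Y : ι → Ω → ℝ} (hind : iIndepFun Y μ) (hY : ∀ i, MemLp (Y i) 2 μ)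
    (hsum : ∑' i, eLpNorm (Y i) 1 μ ≠ ∞) :
    evariance (fun ω => ∑' i, Y i ω) μ ≤ ∑' i, evariance (Y i) μ := by
  have hsum_mean : Summable fun i => μ[Y i] := by
    refine Summable.of_enorm (ne_top_of_le_ne_top hsum (ENNReal.tsum_le_tsum fun i => ?_))
    rw [eLpNorm_one_eq_lintegral_enorm]
    exact enorm_integral_le_lintegral_enorm _
  have hpartial : ∀ᵐ ω ∂μ,
      Tendsto (fun s : Finset ι => (∑ i ∈ s, Y i) ω) atTop (𝓝 (∑' i, Y i ω)) := by
    filter_upwards [summable_norm_of_tsum_eLpNorm_ne_top le_rfl (fun i => (hY i).1) hsum]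
      with ω hω
    simp only [Finset.sum_apply]
    exact hω.of_norm.hasSum
  have hcentered : ∀ᵐ ω ∂μ,
      Tendsto (fun s : Finset ι => ‖(∑ i ∈ s, Y i) ω - μ[∑ i ∈ s, Y i]‖ₑ ^ 2) atTop
        (𝓝 (‖∑' i, Y i ω - ∑' i, μ[Y i]‖ₑ ^ 2)) := by
    filter_upwards [hpartial] with ω hω
    simp only [Finset.sum_apply] at hω ⊢
    simp only [integral_finsetSum _ fun i _ => (hY i).integrable one_le_two]
    exact ENNReal.Tendsto.pow (hω.sub hsum_mean.hasSum).enorm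
  have hmeas : ∀ s : Finset ι, AEStronglyMeasurable (∑ i ∈ s, Y i) μ := fun s =>
    (memLp_finsetSum' s fun i _ => hY i).1
  calc evariance (fun ω => ∑' i, Y i ω) μ
      ≤ ∫⁻ ω, ‖∑' i, Y i ω - ∑' i, μ[Y i]‖ₑ ^ 2 ∂μ :=
        evariance_le_lintegral_enorm_sub_sq (aestronglyMeasurable_of_tendsto_ae _ hmeas hpartial) _
    _ = ∫⁻ ω, liminf (fun s : Finset ι => ‖(∑ i ∈ s, Y i) ω - μ[∑ i ∈ s, Y i]‖ₑ ^ 2)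
          atTop ∂μ :=
        lintegral_congr_ae (hcentered.mono fun ω h => h.liminf_eq.symm)
    _ ≤ liminf (fun s : Finset ι => evariance (∑ i ∈ s, Y i) μ) atTop :=
        lintegral_liminf_le' fun s => ((hmeas s).aemeasurable.sub_const _).enorm.pow_const 2
    _ ≤ ∑' i, evariance (Y i) μ := by
        refine liminf_le_of_frequently_le' (Frequently.of_forall fun s => ?_)
        rw [evariance_finset_sum hind hY]
        exact ENNReal.sum_le_tsum s

theorem eLpNorm_sub_integral_le [IsProbabilityMeasure μ] {Y : Ω → ℝ}
    (hY : AEStronglyMeasurable Y μ) {p : ℝ≥0∞} (hp : 1 ≤ p) :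
    eLpNorm (fun ω => Y ω - μ[Y]) p μ ≤ 2 * eLpNorm Y p μ := by
  have hmean : eLpNorm (fun _ => μ[Y]) p μ ≤ eLpNorm Y p μ := by
    rw [eLpNorm_const _ (zero_lt_one.trans_le hp).ne' (NeZero.ne' μ).symm, measure_univ,
      ENNReal.one_rpow, mul_one]
    calc ‖μ[Y]‖ₑ ≤ eLpNorm Y 1 μ :=
          (enorm_integral_le_lintegral_enorm Y).trans_eq eLpNorm_one_eq_lintegral_enorm.symm
      _ ≤ eLpNorm Y p μ := eLpNorm_le_eLpNorm_of_exponent_le hp hY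
  rw [two_mul]
  exact (eLpNorm_sub_le hY aestronglyMeasurable_const hp).trans (add_le_add le_rfl hmean)

theorem lintegral_enorm_sub_integral_pow_le [IsProbabilityMeasure μ] {Y : Ω → ℝ}
    (hY : AEStronglyMeasurable Y μ) {p : ℕ} (hp : 1 ≤ p) :
    ∫⁻ ω, ‖Y ω - μ[Y]‖ₑ ^ p ∂μ ≤ 2 ^ p * ∫⁻ ω, ‖Y ω‖ₑ ^ p ∂μ := by
  have hp0 : (p : ℝ≥0) ≠ 0 := by exact_mod_cast (Nat.one_le_iff_ne_zero.mp hp)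
  have hpow (f : Ω → ℝ) : ∫⁻ ω, ‖f ω‖ₑ ^ p ∂μ = eLpNorm f p μ ^ p := by
    have := eLpNorm_nnreal_pow_eq_lintegral (μ := μ) (f := f) hp0
    simp only [NNReal.coe_natCast, ENNReal.rpow_natCast, ENNReal.coe_natCast] at this
    exact this.symm
  rw [hpow, hpow, ← mul_pow]
  exact pow_le_pow_left' (eLpNorm_sub_integral_le hY (by exact_mod_cast hp)) p

section LinearStatistics

variable {ι : Type*} {N : ι → Ω → ℕ} {n : ℝ} {β : ℕ → ℝ} {c : ℝ}

theorem tsum_lintegral_ofReal_comp_le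
    (hmean : ∑' i, ∫⁻ ω, (N i ω : ℝ≥0∞) ∂μ = ENNReal.ofReal n) {f : ℕ → ℝ} {d : ℝ}
    (hd : 0 ≤ d) (hf : ∀ k, f k ≤ d * k) :
    ∑' i, ∫⁻ ω, ENNReal.ofReal (f (N i ω)) ∂μ ≤ ENNReal.ofReal (d * n) := by
  rw [ENNReal.ofReal_mul hd, ← hmean, ← ENNReal.tsum_mul_left]
  refine ENNReal.tsum_le_tsum fun i => ?_
  rw [← lintegral_const_mul' _ _ ENNReal.ofReal_ne_top]
  refine lintegral_mono fun ω => ?_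
  rw [← ENNReal.ofReal_natCast, ← ENNReal.ofReal_mul hd]
  exact ENNReal.ofReal_le_ofReal (hf _)

theorem tsum_lintegral_abs_sub_integral_comp_pow_three_le [IsProbabilityMeasure μ]
    (hN : ∀ i, Measurable (N i))
    (hmean : ∑' i, ∫⁻ ω, (N i ω : ℝ≥0∞) ∂μ = ENNReal.ofReal n) (hc : 0 ≤ c)
    (hβ : ∀ k, |β k| ^ 3 ≤ c * k) :
    ∑' i, ∫⁻ ω, ENNReal.ofReal (|β (N i ω) - ∫ ω', β (N i ω') ∂μ| ^ 3) ∂μ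
      ≤ ENNReal.ofReal (8 * c * n) := by
  calc ∑' i, ∫⁻ ω, ENNReal.ofReal (|β (N i ω) - ∫ ω', β (N i ω') ∂μ| ^ 3) ∂μ
      ≤ ∑' i, 2 ^ 3 * ∫⁻ ω, ENNReal.ofReal (|β (N i ω)| ^ 3) ∂μ := by
        refine ENNReal.tsum_le_tsum fun i => ?_
        simpa only [Real.enorm_pow_eq_ofReal_abs_pow] using
          lintegral_enorm_sub_integral_pow_le (Y := fun ω => β (N i ω))
            ((measurable_of_countable β).comp (hN i)).aestronglyMeasurable (p := 3) (by norm_num)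
    _ ≤ 2 ^ 3 * ENNReal.ofReal (c * n) := by
        rw [ENNReal.tsum_mul_left]
        gcongr
        exact tsum_lintegral_ofReal_comp_le hmean hc hβ
    _ = ENNReal.ofReal (8 * c * n) := by
        rw [mul_assoc, ENNReal.ofReal_mul (by norm_num : (0 : ℝ) ≤ 8)]
        norm_num

variable [Countable ι]

theorem integral_tsum_comp_le (hN : ∀ i, Measurable (N i))
    (hmean : ∑' i, ∫⁻ ω, (N i ω : ℝ≥0∞) ∂μ = ENNReal.ofReal n) (hn : 0 ≤ n)
    (hc : 0 ≤ c) (hβ : ∀ k, β k ≤ c * k) :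
    ∫ ω, ∑' i, β (N i ω) ∂μ ≤ c * n :=
  integral_tsum_le_of_tsum_lintegral_ofReal_le
    (fun i => ((measurable_of_countable β).comp (hN i)).aemeasurable) (mul_nonneg hc hn)
    (tsum_lintegral_ofReal_comp_le hmean hc hβ)

theorem variance_tsum_comp_le [IsProbabilityMeasure μ] (hN : ∀ i, Measurable (N i))
    (hind : iIndepFun N μ)
    (hmean : ∑' i, ∫⁻ ω, (N i ω : ℝ≥0∞) ∂μ = ENNReal.ofReal n) (hn : 0 ≤ n) (hc : 0 ≤ c)
    (hβ : ∀ k, |β k| ^ 2 ≤ c * k) :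
    variance (fun ω => ∑' i, β (N i ω)) μ ≤ c * n := by
  have hmeas : ∀ i, Measurable fun ω => β (N i ω) := fun i =>
    (measurable_of_countable β).comp (hN i)
  have hsq : ∀ i, evariance (fun ω => β (N i ω)) μ
      ≤ ∫⁻ ω, ENNReal.ofReal (|β (N i ω)| ^ 2) ∂μ := fun i => by
    simpa only [sub_zero, Real.enorm_pow_eq_ofReal_abs_pow] using
      evariance_le_lintegral_enorm_sub_sq (hmeas i).aestronglyMeasurable 0
  have hsq_sum := tsum_lintegral_ofReal_comp_le hmean hc hβ
  have hL2 : ∀ i, MemLp (fun ω => β (N i ω)) 2 μ := fun i =>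
    (evariance_lt_top_iff_memLp (hmeas i).aestronglyMeasurable).mp <| (hsq i).trans_lt <|
      ((ENNReal.le_tsum i).trans hsq_sum).trans_lt ENNReal.ofReal_lt_top
  have hL1 : ∑' i, eLpNorm (fun ω => β (N i ω)) 1 μ ≠ ∞ := by
    simp only [eLpNorm_one_eq_lintegral_enorm, Real.enorm_eq_ofReal_abs]
    exact ((tsum_lintegral_ofReal_comp_le hmean (by positivity) fun k =>
      abs_le_one_add_mul_of_abs_pow_le two_ne_zero (hβ k)).trans_lt ENNReal.ofReal_lt_top).ne
  refine ENNReal.toReal_le_of_le_ofReal (mul_nonneg hc hn) ?_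
  calc evariance (fun ω => ∑' i, β (N i ω)) μ
      ≤ ∑' i, evariance (fun ω => β (N i ω)) μ :=
        evariance_tsum_le (hind.comp (fun _ => β) fun _ => measurable_of_countable β) hL2 hL1
    _ ≤ ∑' i, ∫⁻ ω, ENNReal.ofReal (|β (N i ω)| ^ 2) ∂μ := ENNReal.tsum_le_tsum hsq
    _ ≤ ENNReal.ofReal (c * n) := hsq_sum

end LinearStatistics

end ProbabilityTheory

theorem moment_bounds_linear_tests_general
    (Ω : Type*) [MeasurableSpace Ω] (μ : Measure Ω) [IsProbabilityMeasure μ]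
    (X : Type*) [Countable X]
    (n : ℝ) (lam : X → ℝ) (hlam : ∀ x, 0 ≤ lam x) (hsum : HasSum lam n)
    (N : X → Ω → ℕ) (hmeas : ∀ x, Measurable (N x))
    (hindep : ProbabilityTheory.iIndepFun N μ)
    (hdist : ∀ x k, μ {ω | N x ω = k}
      = ENNReal.ofReal (lam x ^ k * Real.exp (-lam x) / k.factorial))
    (α : ℕ → ℝ) (c : ℝ) (hc : 0 < c)
    (Tx : X → Ω → ℝ) (hTx : ∀ x ω, Tx x ω = if 1 ≤ N x ω then α (N x ω) else 0)
    (T : Ω → ℝ) (hT : ∀ ω, T ω = ∑' x, Tx x ω) :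
    ((∀ k : ℕ, 1 ≤ k → α k ≤ c * k) → Integrable T μ → ∫ ω, T ω ∂μ ≤ c * n)
    ∧ ((∀ k : ℕ, 1 ≤ k → (α k) ^ 2 ≤ c * k) → MemLp T 2 μ →
        ProbabilityTheory.variance T μ ≤ c * n)
    ∧ ((∀ k : ℕ, 1 ≤ k → |α k| ^ 3 ≤ c * k) →
        ∑' x, ∫⁻ ω, ENNReal.ofReal (|Tx x ω - ∫ ω', Tx x ω' ∂μ| ^ 3) ∂μ
          ≤ ENNReal.ofReal (8 * c * n)) := by
  set β : ℕ → ℝ := fun k => if 1 ≤ k then α k else 0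
  have hTβ : Tx = fun x ω => β (N x ω) := funext fun x => funext (hTx x)
  obtain rfl : T = fun ω => ∑' x, β (N x ω) := funext fun ω => by rw [hT, hTβ]
  subst hTβ
  have hmean : ∑' x, ∫⁻ ω, (N x ω : ℝ≥0∞) ∂μ = ENNReal.ofReal n := by
    have hlaw x := hasLaw_poissonMeasure_of_measure_eq (hmeas x) (hlam x) (hdist x)
    simp_rw [fun x => (hlaw x).lintegral_comp (f := fun k : ℕ => (k : ℝ≥0∞)) .of_discrete,
      lintegral_natCast_poissonMeasure]
    rw [← hsum.tsum_eq, ENNReal.ofReal_tsum_of_nonneg hlam hsum.summable]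
    rfl
  have hβ {g : ℝ → ℝ} {d : ℝ} (hg : g 0 = 0) (hα : ∀ k, 1 ≤ k → g (α k) ≤ d * k) (k : ℕ) :
      g (β k) ≤ d * k := by
    by_cases hk : 1 ≤ k
    · simpa [β, hk] using hα k hk
    · obtain rfl : k = 0 := by omega
      simp [β, hg]
  refine ⟨fun hα _ => ?_, fun hα _ => ?_, fun hα => ?_⟩
  · exact integral_tsum_comp_le hmeas hmean (hsum.nonneg hlam) hc.le (hβ (g := id) rfl hα)
  · exact variance_tsum_comp_le hmeas hindep hmean (hsum.nonneg hlam) hc.le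
      (hβ (g := fun b => |b| ^ 2) (by simp) fun k hk => (sq_abs _).trans_le (hα k hk))
  · exact tsum_lintegral_abs_sub_integral_comp_pow_three_le hmeas hmean hc.le
      (hβ (g := fun b => |b| ^ 3) (by simp) hα)

/-- Upper bounds on moments of linear test statistics `T = ∑_{k≥1} α_k M_k = ∑_x T_x`,
`T_x = ∑_{k≥1} α_k 1{N_x = k}`, for independent Poisson(`λ_x`) counts `N_x` with
`∑_x λ_x = n`: (i) if `α_k ≤ c·k` then `E[T] ≤ c·n`; (ii) if `α_k² ≤ c·k` then
`Var[T] ≤ c·n`; (iii) if `|α_k|³ ≤ c·k` then `∑_x E[|T_x - E[T_x]|³] ≤ 8c·n`. -/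
theorem moment_bounds_linear_tests
    (Ω : Type*) [MeasurableSpace Ω] (μ : Measure Ω) [IsProbabilityMeasure μ]
    (X : Type*) [Countable X]
    (n : ℝ) (hn : 0 < n) (lam : X → ℝ) (hlam : ∀ x, 0 ≤ lam x) (hsum : HasSum lam n)
    (N : X → Ω → ℕ) (hmeas : ∀ x, Measurable (N x))
    (hindep : ProbabilityTheory.iIndepFun N μ)
    (hdist : ∀ x k, μ {ω | N x ω = k}
      = ENNReal.ofReal (lam x ^ k * Real.exp (-lam x) / k.factorial))
    (α : ℕ → ℝ) (c : ℝ) (hc : 0 < c)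
    (Tx : X → Ω → ℝ) (hTx : ∀ x ω, Tx x ω = if 1 ≤ N x ω then α (N x ω) else 0)
    (T : Ω → ℝ) (hT : ∀ ω, T ω = ∑' x, Tx x ω) :
    ((∀ k : ℕ, 1 ≤ k → α k ≤ c * k) → Integrable T μ → ∫ ω, T ω ∂μ ≤ c * n)
    ∧ ((∀ k : ℕ, 1 ≤ k → (α k) ^ 2 ≤ c * k) → MemLp T 2 μ →
        ProbabilityTheory.variance T μ ≤ c * n)
    ∧ ((∀ k : ℕ, 1 ≤ k → |α k| ^ 3 ≤ c * k) →
        ∑' x, ∫⁻ ω, ENNReal.ofReal (|Tx x ω - ∫ ω', Tx x ω' ∂μ| ^ 3) ∂μ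
          ≤ ENNReal.ofReal (8 * c * n)) :=
  moment_bounds_linear_tests_general Ω μ X n lam hlam hsum N hmeas hindep hdist α c hc Tx hTx T hT
end

section
/- Let n and k be integers with 1 ≤ k ≤ n−1 and let θ ∈ [0,1]. Then C(n,k)·θ^k·(1−θ)^{n−k} ≤ C(n,k)·(k/n)^k·(1−k/n)^{n−k} ≤ √(n/(2πk(n−k))), where C(n,k) is the binomial coefficient. That is, over θ the binomial probability mass function f_k^n(θ) := C(n,k)θ^k(1−θ)^{n−k} is maximized at θ = k/n, and its maximal value is at most √(n/(2πk(n−k))). -/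
/-!
Writing `n = k + m` and `a = k/n`, `b = m/n`, AM-GM for `k` copies of `θ/a` and `m` copies of
`(1-θ)/b`, whose mean is `1`, gives `θ^k (1-θ)^m ≤ a^k b^m`. For the value at the mode, write
`j! = s_j √(2j) (j/e)^j` with the Stirling sequence `s`: it decreases to `√π`, so `s_k ≥ s_n`
and `s_m ≥ √π`, and the powers of `e` and of `k, m, n` cancel in `C(n,k) k^k m^m / n^n`, leaving
`√(n/(2πkm))`.
-/

open Real Stirling
open scoped Nat

lemma pow_mul_pow_le_mean_pow {x y : ℝ} (hx : 0 ≤ x) (hy : 0 ≤ y) {k m : ℕ} (hkm : k + m ≠ 0) :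
    x ^ k * y ^ m ≤ ((k * x + m * y) / (k + m)) ^ (k + m) := by
  have hn : (0 : ℝ) < k + m := by exact_mod_cast Nat.pos_of_ne_zero hkm
  have hamgm := geom_mean_le_arith_mean2_weighted (div_nonneg k.cast_nonneg hn.le)
    (div_nonneg m.cast_nonneg hn.le) hx hy (by rw [← add_div, div_self hn.ne'])
  calc x ^ k * y ^ m
      = (x ^ ((k : ℝ) / (k + m)) * y ^ ((m : ℝ) / (k + m))) ^ ((k + m : ℕ) : ℝ) := by
        rw [mul_rpow (by positivity) (by positivity), ← rpow_mul hx, ← rpow_mul hy]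
        push_cast
        rw [div_mul_cancel₀ _ hn.ne', div_mul_cancel₀ _ hn.ne', rpow_natCast, rpow_natCast]
    _ ≤ ((k : ℝ) / (k + m) * x + (m : ℝ) / (k + m) * y) ^ ((k + m : ℕ) : ℝ) := by
        gcongr
    _ = ((k * x + m * y) / (k + m)) ^ (k + m) := by
        rw [rpow_natCast]
        congr 1
        field_simp

theorem pow_mul_one_sub_pow_le {θ : ℝ} (h0 : 0 ≤ θ) (h1 : θ ≤ 1) {k m : ℕ} (hk : k ≠ 0)
    (hm : m ≠ 0) :
    θ ^ k * (1 - θ) ^ m ≤ ((k : ℝ) / (k + m)) ^ k * ((m : ℝ) / (k + m)) ^ m := by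
  set a := (k : ℝ) / (k + m)
  set b := (m : ℝ) / (k + m)
  have hamgm := pow_mul_pow_le_mean_pow (div_nonneg h0 (by positivity : 0 ≤ a))
    (div_nonneg (sub_nonneg.2 h1) (by positivity : 0 ≤ b)) (k := k) (m := m) (by omega)
  have hmean : (k * (θ / a) + m * ((1 - θ) / b)) / (k + m) = 1 := by
    simp only [a, b]
    field_simp
    ring
  rw [hmean, one_pow] at hamgm
  calc θ ^ k * (1 - θ) ^ m = a ^ k * b ^ m * ((θ / a) ^ k * ((1 - θ) / b) ^ m) := by
        rw [mul_mul_mul_comm, ← mul_pow, ← mul_pow, mul_div_cancel₀ _ (by positivity),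
          mul_div_cancel₀ _ (by positivity)]
    _ ≤ a ^ k * b ^ m := mul_le_of_le_one_right (by positivity) hamgm

lemma stirlingSeq_le_of_le {j l : ℕ} (hj : j ≠ 0) (hjl : j ≤ l) :
    stirlingSeq l ≤ stirlingSeq j := by
  have h := stirlingSeq'_antitone (Nat.pred_le_pred hjl)
  simp only [Function.comp_apply, Nat.succ_pred_eq_of_ne_zero hj,
    Nat.succ_pred_eq_of_ne_zero (by omega : l ≠ 0)] at h
  exact h

lemma factorial_eq_stirlingSeq_mul {j : ℕ} (hj : j ≠ 0) :
    (j ! : ℝ) = stirlingSeq j * (√(2 * j) * (j / exp 1) ^ j) := by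
  rw [stirlingSeq, div_mul_cancel₀ _ (by positivity)]

lemma stirlingSeq_mul_le_factorial {j l : ℕ} (hj : j ≠ 0) (hjl : j ≤ l) :
    stirlingSeq l * (√(2 * j) * (j / exp 1) ^ j) ≤ j ! := by
  rw [factorial_eq_stirlingSeq_mul hj]
  gcongr
  exact stirlingSeq_le_of_le hj hjl

theorem choose_mul_pow_mul_pow_le {k m : ℕ} (hk : k ≠ 0) (hm : m ≠ 0) :
    ((k + m).choose k : ℝ) * ((k : ℝ) / (k + m)) ^ k * ((m : ℝ) / (k + m)) ^ m
      ≤ √((k + m) / (2 * π * k * m)) := by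
  have hk_fac := stirlingSeq_mul_le_factorial hk (Nat.le_add_right k m)
  have hm_fac := le_factorial_stirling m
  have hs : 0 < stirlingSeq (k + m) := lt_of_lt_of_le (by positivity)
    (sqrt_pi_le_stirlingSeq (by omega : k + m ≠ 0))
  rw [Nat.cast_choose ℝ (Nat.le_add_right k m), Nat.add_sub_cancel_left,
    factorial_eq_stirlingSeq_mul (by omega : k + m ≠ 0)]
  push_cast
  calc stirlingSeq (k + m) * (√(2 * (k + m)) * ((k + m) / exp 1) ^ (k + m)) / (k ! * m !)
        * (k / (k + m)) ^ k * (m / (k + m)) ^ m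
      ≤ stirlingSeq (k + m) * (√(2 * (k + m)) * ((k + m) / exp 1) ^ (k + m))
        / (stirlingSeq (k + m) * (√(2 * k) * (k / exp 1) ^ k) * (√(2 * π * m) * (m / exp 1) ^ m))
        * (k / (k + m)) ^ k * (m / (k + m)) ^ m := by
        gcongr
    _ = √(2 * (k + m)) / (√(2 * k) * √(2 * π * m)) := by
        simp only [div_pow, pow_add]
        field_simp
    _ = √((k + m) / (2 * π * k * m)) := by
        rw [← sqrt_mul (by positivity), ← sqrt_div (by positivity)]
        congr 1
        field_simp

/-- The binomial pmf `θ ↦ C(n,k) θ^k (1-θ)^{n-k}` is maximized over `θ ∈ [0,1]` at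
`θ = k/n`, with maximal value at most `√(n/(2πk(n-k)))`, for `1 ≤ k ≤ n-1`. -/
theorem binomial_pmf_max
    (n k : ℕ) (hk : 1 ≤ k) (hkn : k + 1 ≤ n) (θ : ℝ) (hθ : θ ∈ Set.Icc (0 : ℝ) 1) :
    (n.choose k : ℝ) * θ ^ k * (1 - θ) ^ (n - k)
      ≤ (n.choose k : ℝ) * ((k : ℝ) / n) ^ k * (1 - (k : ℝ) / n) ^ (n - k)
    ∧ (n.choose k : ℝ) * ((k : ℝ) / n) ^ k * (1 - (k : ℝ) / n) ^ (n - k)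
      ≤ Real.sqrt ((n : ℝ) / (2 * Real.pi * k * ((n : ℝ) - k))) := by
  obtain ⟨m, rfl⟩ : ∃ m, n = k + m := ⟨n - k, by omega⟩
  have hk0 : k ≠ 0 := by omega
  have hm0 : m ≠ 0 := by omega
  have hmode : 1 - (k : ℝ) / (k + m) = m / (k + m) := by
    field_simp
    ring
  push_cast
  rw [Nat.add_sub_cancel_left, add_sub_cancel_left, hmode, mul_assoc, mul_assoc]
  refine ⟨?_, ?_⟩
  · exact mul_le_mul_of_nonneg_left (pow_mul_one_sub_pow_le hθ.1 hθ.2 hk0 hm0) (by positivity)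
  · rw [← mul_assoc]
    exact choose_mul_pow_mul_pow_le hk0 hm0
end
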